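/- Let (X_n) be a sequence of nonnegative-integer-valued random variables adapted to a filtration (F_n), with X_0 = 0, and such that for each n, either X_{n+1} = X_n + 1 or X_{n+1} = 0. Suppose there exist constants δ ∈ (0,1), c < ∞, α > 0 such that for all n: (i) P(X_m > 0 for all m > n | F_n) ≥ δ, and (ii) P(X_{n+1} = 0 | F_n) ≤ c·e^{-α X_n}. Then, letting T = max{n : X_n = 0}, there exists β = β(δ, c, α) > 0 such that E[e^{βT}] < ∞. -/

import Mathlib

open MeasureTheory Filter

private lemma geomsum_le {r : ℝ} (h0 : 0 ≤ r) (h1 : r < 1) (n : ℕ) :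
    ∑ i ∈ Finset.range n, r ^ i ≤ 1 / (1 - r) := by
  have hne : r ≠ 1 := ne_of_lt h1
  have h1r : 0 < 1 - r := by linarith
  rw [geom_sum_eq hne]
  have he : (r ^ n - 1)/(r - 1) = (1 - r ^ n)/(1 - r) := by
    rw [← neg_div_neg_eq]; ring_nf
  rw [he, div_le_div_iff₀ h1r h1r]
  nlinarith [pow_nonneg h0 n]

/-- If `(X_n)` is an adapted nonnegative-integer process with `X_0 = 0` which at each step
either increases by one or resets to zero, and if conditionally on the past the process
never again returns to zero with probability at least `δ`, while the conditional probability of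
resetting is at most `c·exp(-α X_n)`, then the last reset time `T` has a finite exponential
moment. -/
theorem two_sided_lerw_stmt0
    {Ω : Type*} {m0 : MeasurableSpace Ω} {μ : Measure Ω} [IsProbabilityMeasure μ]
    (F : Filtration ℕ m0)
    (X : ℕ → Ω → ℕ)
    (hadapted : ∀ n, Measurable[F n] (X n))
    (hX0 : ∀ ω, X 0 ω = 0)
    (hstep : ∀ n ω, X (n + 1) ω = X n ω + 1 ∨ X (n + 1) ω = 0)
    (δ : ℝ) (hδ : δ ∈ Set.Ioo (0 : ℝ) 1)
    (c α : ℝ) (hc : 0 < c) (hα : 0 < α)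
    (h1 : ∀ n, ∀ᵐ ω ∂μ,
      δ ≤ (μ[Set.indicator {ω' | ∀ m > n, 0 < X m ω'} (fun _ => (1 : ℝ)) | F n]) ω)
    (h2 : ∀ n, ∀ᵐ ω ∂μ,
      (μ[Set.indicator {ω' | X (n + 1) ω' = 0} (fun _ => (1 : ℝ)) | F n]) ω
        ≤ c * Real.exp (-α * (X n ω : ℝ)))
    (T : Ω → ℕ) (hT : ∀ ω, T ω = sSup {n | X n ω = 0}) :
    ∃ β > (0 : ℝ), ∫⁻ ω, ENNReal.ofReal (Real.exp (β * (T ω : ℝ))) ∂μ < ⊤ := by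
  obtain ⟨hδ0, hδ1⟩ := hδ
  have hXm : ∀ n, Measurable (X n) := fun n => (hadapted n).mono (F.le n) le_rfl
  -- the reset events
  set Z : ℕ → Set Ω := fun n => {ω | X n ω = 0} with hZdef
  have hZmF : ∀ n, MeasurableSet[F n] (Z n) := fun n => hadapted n (measurableSet_singleton 0)
  have hZm : ∀ n, MeasurableSet (Z n) := fun n => F.le n _ (hZmF n)
  set p : ℕ → ℝ := fun t => (μ (Z t)).toReal with hpdef
  have hpnn : ∀ t, 0 ≤ p t := fun t => ENNReal.toReal_nonneg
  have hp0 : p 0 = 1 := by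
    have : Z 0 = Set.univ := by
      ext ω; simp [hZdef, hX0 ω]
    simp [hpdef, this]
  -- Lemma A : conditional reset bound
  have keyA : ∀ n (B : Set Ω), MeasurableSet[F n] B → ∀ k : ℕ, (∀ ω ∈ B, k ≤ X n ω) →
      (μ (B ∩ Z (n+1))).toReal ≤ c * Real.exp (-α * k) * (μ B).toReal := by
    intro n B hB k hk
    have hBm : MeasurableSet B := F.le n _ hB
    have hind : Integrable ((Z (n+1)).indicator (fun _ => (1:ℝ))) μ :=
      (integrable_const 1).indicator (hZm (n+1))
    have e1 : ∫ ω in B, (Z (n+1)).indicator (fun _ => (1:ℝ)) ω ∂μ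
        = (μ (B ∩ Z (n+1))).toReal := by
      rw [setIntegral_indicator (hZm (n+1)), setIntegral_const]
      simp; rfl
    have e2 : ∫ ω in B, (μ[(Z (n+1)).indicator (fun _ => (1:ℝ)) | F n]) ω ∂μ
        = (μ (B ∩ Z (n+1))).toReal := by
      rw [setIntegral_condExp (F.le n) hind hB, e1]
    have e3 : ∫ ω in B, (μ[(Z (n+1)).indicator (fun _ => (1:ℝ)) | F n]) ω ∂μ
        ≤ ∫ ω in B, c * Real.exp (-α * k) ∂μ := by
      refine setIntegral_mono_ae_restrict integrable_condExp.integrableOn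
        (integrableOn_const (measure_lt_top μ B).ne) ?_
      filter_upwards [ae_restrict_of_ae (h2 n), ae_restrict_mem hBm] with ω hω hωB
      refine le_trans hω ?_
      have hx : (k : ℝ) ≤ (X n ω : ℝ) := by exact_mod_cast hk ω hωB
      have : -α * (X n ω : ℝ) ≤ -α * k := by nlinarith
      exact mul_le_mul_of_nonneg_left (Real.exp_le_exp.2 this) (le_of_lt hc)
    rw [e2] at e3
    rw [setIntegral_const] at e3
    calc (μ (B ∩ Z (n+1))).toReal ≤ (μ B).toReal • (c * Real.exp (-α * k)) := e3
    _ = c * Real.exp (-α * k) * (μ B).toReal := by rw [smul_eq_mul]; ring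
  -- Lemma B : survival bound
  have keyB : ∀ s (B : Set Ω), MeasurableSet[F s] B →
      (μ (B ∩ {ω | ∃ m, s < m ∧ X m ω = 0})).toReal ≤ (1 - δ) * (μ B).toReal := by
    intro s B hB
    have hBm : MeasurableSet B := F.le s _ hB
    set A : Set Ω := {ω' | ∀ m > s, 0 < X m ω'} with hA
    have hAm : MeasurableSet A := by
      have hAeq : A = ⋂ m ∈ {m | s < m}, {ω | 0 < X m ω} := by
        ext ω; simp [hA]
      rw [hAeq]
      exact MeasurableSet.biInter (Set.to_countable _)
        (fun m _ => measurableSet_lt measurable_const (hXm m))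
    have hind : Integrable (A.indicator (fun _ => (1:ℝ))) μ := (integrable_const 1).indicator hAm
    have e2 : ∫ ω in B, (μ[A.indicator (fun _ => (1:ℝ)) | F s]) ω ∂μ = (μ (B ∩ A)).toReal := by
      rw [setIntegral_condExp (F.le s) hind hB, setIntegral_indicator hAm, setIntegral_const]
      simp; rfl
    have e3 : δ * (μ B).toReal ≤ (μ (B ∩ A)).toReal := by
      rw [← e2]
      calc δ * (μ B).toReal = ∫ _ω in B, δ ∂μ := by rw [setIntegral_const]; rw [smul_eq_mul]; simp only [Measure.real]; ring
      _ ≤ ∫ ω in B, (μ[A.indicator (fun _ => (1:ℝ)) | F s]) ω ∂μ := by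
        refine setIntegral_mono_ae_restrict (integrableOn_const (measure_lt_top μ B).ne)
          integrable_condExp.integrableOn ?_
        exact ae_restrict_of_ae (h1 s)
    have hcompl : B ∩ {ω | ∃ m, s < m ∧ X m ω = 0} = B \ A := by
      ext ω
      simp only [Set.mem_inter_iff, Set.mem_setOf_eq, Set.mem_diff, hA]
      constructor
      · rintro ⟨hb, m, hm, h0⟩
        exact ⟨hb, fun h => by have := h m hm; omega⟩
      · rintro ⟨hb, h⟩
        push_neg at h
        obtain ⟨m, hm, h0⟩ := h
        exact ⟨hb, m, hm, by omega⟩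
    have hadd := measure_inter_add_diff (μ := μ) B hAm
    have hfin1 : μ (B ∩ A) ≠ ⊤ := measure_ne_top μ _
    have hfin2 : μ (B \ A) ≠ ⊤ := measure_ne_top μ _
    have : (μ (B ∩ A)).toReal + (μ (B \ A)).toReal = (μ B).toReal := by
      rw [← ENNReal.toReal_add hfin1 hfin2, hadd]
    rw [hcompl]
    linarith
  -- growth between resets
  have hgrow : ∀ s t ω, X s ω = 0 → (∀ m, s < m → m < t → X m ω ≠ 0) →
      ∀ m, s ≤ m → m < t → X m ω = m - s := by
    intro s t ω h0 hno m
    induction m with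
    | zero =>
      intro h1' _
      have : s = 0 := by omega
      subst this; simpa using h0
    | succ m ih =>
      intro hsm hmt
      rcases eq_or_lt_of_le hsm with he | hlt
      · rw [← he]; simp [h0]
      · have hsm' : s ≤ m := by omega
        have hm : X m ω = m - s := ih hsm' (by omega)
        rcases hstep m ω with h | h
        · rw [h, hm]; omega
        · exact absurd h (hno (m+1) hlt hmt)
  -- the "previous reset" events
  set G : ℕ → ℕ → Set Ω := fun s t => {ω | X s ω = 0 ∧ ∀ m, s < m → m < t → X m ω ≠ 0} with hGdef
  have hGm : ∀ s j, MeasurableSet[F (s+j)] (G s (s+j+1)) := by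
    intro s j
    have hGeq : G s (s+j+1) = Z s ∩ ⋂ m ∈ Set.Ioo s (s+j+1), (Z m)ᶜ := by
      ext ω; simp [hGdef, hZdef]
    rw [hGeq]
    refine (F.mono (by omega) _ (hZmF s)).inter
      (MeasurableSet.biInter (Set.to_countable _) (fun m hm => ?_))
    simp only [Set.mem_Ioo] at hm
    exact F.mono (by omega : m ≤ s + j) _ (hZmF m).compl
  have hGsub : ∀ s t, G s t ⊆ Z s := fun s t ω h => h.1
  set q : ℕ → ℕ → ℝ := fun s t => (μ (G s t ∩ Z t)).toReal with hqdef
  have hqnn : ∀ s t, 0 ≤ q s t := fun s t => ENNReal.toReal_nonneg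
  -- per-event exponential bound
  have hEbound : ∀ s j, q s (s+j+1) ≤ c * Real.exp (-α * j) * p s := by
    intro s j
    have hk : ∀ ω ∈ G s (s+j+1), j ≤ X (s+j) ω := by
      intro ω hω
      have := hgrow s (s+j+1) ω hω.1 hω.2 (s+j) (by omega) (by omega)
      omega
    have h := keyA (s+j) (G s (s+j+1)) (hGm s j) j hk
    have hts : s + j + 1 = s + (j + 1) := by omega
    refine le_trans (le_of_eq ?_) (le_trans h ?_)
    · rfl
    · have hmono : (μ (G s (s+j+1))).toReal ≤ p s := by
        refine ENNReal.toReal_le_toReal (measure_ne_top μ _) (measure_ne_top μ _) |>.2 ?_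
        exact measure_mono (hGsub s (s+j+1))
      have hco : 0 ≤ c * Real.exp (-α * j) := by positivity
      exact mul_le_mul_of_nonneg_left hmono hco
  -- total mass of gap events
  have hdisj : ∀ s (S : Finset ℕ), ∑ j ∈ S, q s (s+j+1) ≤ (1-δ) * p s := by
    intro s S
    have hmeas : ∀ j ∈ S, MeasurableSet (G s (s+j+1) ∩ Z (s+j+1)) :=
      fun j _ => (F.le (s+j) _ (hGm s j)).inter (hZm (s+j+1))
    have hpair : (↑S : Set ℕ).PairwiseDisjoint (fun j => G s (s+j+1) ∩ Z (s+j+1)) := by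
      intro i _ j _ hij
      rcases Nat.lt_or_ge i j with hlt | hge
      · refine Set.disjoint_left.2 ?_
        rintro ω ⟨_, hzi⟩ ⟨⟨_, hno⟩, _⟩
        exact hno (s+i+1) (by omega) (by omega) hzi
      · have hlt : j < i := by omega
        refine Set.disjoint_left.2 ?_
        rintro ω ⟨⟨_, hno⟩, _⟩ ⟨_, hzj⟩
        exact hno (s+j+1) (by omega) (by omega) hzj
    have hsub : (⋃ j ∈ S, (G s (s+j+1) ∩ Z (s+j+1))) ⊆ Z s ∩ {ω | ∃ m, s < m ∧ X m ω = 0} := by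
      intro ω hω
      simp only [Set.mem_iUnion] at hω
      obtain ⟨j, _, ⟨⟨h0, _⟩, ht⟩⟩ := hω
      exact ⟨h0, ⟨s+j+1, by omega, ht⟩⟩
    calc ∑ j ∈ S, q s (s+j+1) = (μ (⋃ j ∈ S, (G s (s+j+1) ∩ Z (s+j+1)))).toReal := by
          rw [measure_biUnion_finset hpair hmeas,
            ENNReal.toReal_sum (fun j _ => measure_ne_top μ _)]
    _ ≤ (μ (Z s ∩ {ω | ∃ m, s < m ∧ X m ω = 0})).toReal :=
        (ENNReal.toReal_le_toReal (measure_ne_top μ _) (measure_ne_top μ _)).2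
          (measure_mono hsub)
    _ ≤ (1-δ) * p s := keyB s (Z s) (hZmF s)
  -- covering: every reset has a previous reset
  have hpcover : ∀ t, p (t+1) ≤ ∑ s ∈ Finset.range (t+1), q s (t+1) := by
    intro t
    have hsub : Z (t+1) ⊆ ⋃ s ∈ Finset.range (t+1), (G s (t+1) ∩ Z (t+1)) := by
      intro ω hω
      have hne : (0 : ℕ) ∈ {m | m < t+1 ∧ X m ω = 0} := ⟨by omega, hX0 ω⟩
      have hbdd : BddAbove {m | m < t+1 ∧ X m ω = 0} := ⟨t, by rintro m ⟨hm1, -⟩; omega⟩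
      have hmem := Nat.sSup_mem ⟨0, hne⟩ hbdd
      set s := sSup {m | m < t+1 ∧ X m ω = 0} with hs
      refine Set.mem_biUnion (Finset.mem_range.2 hmem.1) ⟨⟨hmem.2, ?_⟩, hω⟩
      intro m hsm hmt hXm0
      have hmS : m ∈ {m | m < t+1 ∧ X m ω = 0} := ⟨hmt, hXm0⟩
      have := le_csSup hbdd hmS
      omega
    calc p (t+1) ≤ (μ (⋃ s ∈ Finset.range (t+1), (G s (t+1) ∩ Z (t+1)))).toReal :=
        (ENNReal.toReal_le_toReal (measure_ne_top μ _) (measure_ne_top μ _)).2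
          (measure_mono hsub)
    _ ≤ ∑ s ∈ Finset.range (t+1), q s (t+1) := by
        refine le_trans (ENNReal.toReal_le_toReal (measure_ne_top μ _)
          (by exact (ENNReal.sum_lt_top.2 (fun s _ => measure_lt_top μ _)).ne) |>.2
          (measure_biUnion_finset_le _ _)) ?_
        rw [ENNReal.toReal_sum (fun s _ => measure_ne_top μ _)]
  -- choose constants
  set r : ℝ := Real.exp (-(α/2)) with hrdef
  have hr0 : 0 < r := Real.exp_pos _
  have hr1 : r < 1 := Real.exp_lt_one_iff.2 (by linarith)
  obtain ⟨L, hL⟩ := exists_pow_lt_of_lt_one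
    (show (0:ℝ) < δ/4 * (1-r) / (c * Real.exp α) by 
      have h1r : (0:ℝ) < 1 - r := by linarith
      positivity) hr1
  have hratio : (1 : ℝ) < (1 - δ/2)/(1-δ) := by
    rw [lt_div_iff₀ (by linarith)]; linarith
  set β : ℝ := min (α/2) (Real.log ((1 - δ/2)/(1-δ)) / (L+1)) with hβdef
  have hβ0 : 0 < β := by
    refine lt_min (by linarith) ?_
    exact div_pos (Real.log_pos hratio) (by positivity)
  have hβα : β ≤ α/2 := min_le_left _ _
  have hβL : Real.exp (β*(L+1)) * (1-δ) ≤ 1 - δ/2 := by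
    have h1' : β * (L+1) ≤ Real.log ((1 - δ/2)/(1-δ)) := by
      have := min_le_right (α/2) (Real.log ((1 - δ/2)/(1-δ)) / (L+1))
      calc β * (L+1) ≤ (Real.log ((1 - δ/2)/(1-δ)) / (L+1)) * (L+1) := by
            refine mul_le_mul_of_nonneg_right ?_ (by positivity)
            exact this
      _ = Real.log ((1 - δ/2)/(1-δ)) := by field_simp
    have h2' : Real.exp (β*(L+1)) ≤ (1 - δ/2)/(1-δ) := by
      calc Real.exp (β*(L+1)) ≤ Real.exp (Real.log ((1 - δ/2)/(1-δ))) := Real.exp_le_exp.2 h1'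
      _ = (1 - δ/2)/(1-δ) := Real.exp_log (by linarith)
    calc Real.exp (β*(L+1)) * (1-δ) ≤ (1 - δ/2)/(1-δ) * (1-δ) :=
        mul_le_mul_of_nonneg_right h2' (by linarith)
    _ = 1 - δ/2 := div_mul_cancel₀ _ ((by linarith : (0:ℝ) < 1-δ).ne')
  -- the per-s inner sum bound
  have hinner : ∀ (s M : ℕ), ∑ j ∈ Finset.range M, Real.exp (β*(s+j+1)) * q s (s+j+1)
      ≤ (1 - δ/4) * (Real.exp (β*s) * p s) := by
    intro s M
    rw [← Finset.sum_filter_add_sum_filter_not (Finset.range M) (· < L)]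
    have part1 : ∑ j ∈ (Finset.range M).filter (· < L), Real.exp (β*(s+j+1)) * q s (s+j+1)
        ≤ (1 - δ/2) * (Real.exp (β*s) * p s) := by
      have step : ∑ j ∈ (Finset.range M).filter (· < L), Real.exp (β*(s+j+1)) * q s (s+j+1)
          ≤ ∑ j ∈ (Finset.range M).filter (· < L), Real.exp (β*(s+(L+1))) * q s (s+j+1) := by
        refine Finset.sum_le_sum (fun j hj => ?_)
        have hjL : j < L := (Finset.mem_filter.1 hj).2
        refine mul_le_mul_of_nonneg_right (Real.exp_le_exp.2 ?_) (hqnn s _)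
        have : (j:ℝ) + 1 ≤ (L:ℝ) + 1 := by
          have : (j:ℝ) ≤ (L:ℝ) := by exact_mod_cast le_of_lt hjL
          linarith
        nlinarith [hβ0.le]
      rw [← Finset.mul_sum] at step
      refine le_trans step ?_
      have := hdisj s ((Finset.range M).filter (· < L))
      calc Real.exp (β*(s+(L+1))) * ∑ j ∈ (Finset.range M).filter (· < L), q s (s+j+1)
          ≤ Real.exp (β*(s+(L+1))) * ((1-δ) * p s) := by
            refine mul_le_mul_of_nonneg_left this (Real.exp_nonneg _)
      _ = Real.exp (β*s) * (Real.exp (β*(L+1)) * (1-δ)) * p s := by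
            rw [show β*((s:ℝ)+((L:ℝ)+1)) = β*(s:ℝ) + β*((L:ℝ)+1) by ring, Real.exp_add]; ring
      _ ≤ Real.exp (β*s) * (1 - δ/2) * p s := by
            refine mul_le_mul_of_nonneg_right
              (mul_le_mul_of_nonneg_left hβL (Real.exp_nonneg _)) (hpnn s)
      _ = (1 - δ/2) * (Real.exp (β*s) * p s) := by ring
    have part2 : ∑ j ∈ (Finset.range M).filter (¬ · < L), Real.exp (β*(s+j+1)) * q s (s+j+1)
        ≤ (δ/4) * (Real.exp (β*s) * p s) := by
      have step : ∑ j ∈ (Finset.range M).filter (¬ · < L), Real.exp (β*(s+j+1)) * q s (s+j+1)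
          ≤ ∑ j ∈ (Finset.range M).filter (¬ · < L),
              Real.exp (β*s) * (c * Real.exp α * r ^ j) * p s := by
        refine Finset.sum_le_sum (fun j hj => ?_)
        have hq := hEbound s j
        calc Real.exp (β*(s+j+1)) * q s (s+j+1)
            ≤ Real.exp (β*(s+j+1)) * (c * Real.exp (-α * j) * p s) :=
              mul_le_mul_of_nonneg_left hq (Real.exp_nonneg _)
        _ = Real.exp (β*s) * (c * (Real.exp (β*(j+1)) * Real.exp (-α*j))) * p s := by
              rw [show β*((s:ℝ)+j+1) = β*s + β*(j+1) by ring, Real.exp_add]; ring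
        _ ≤ Real.exp (β*s) * (c * Real.exp α * r ^ j) * p s := by
              refine mul_le_mul_of_nonneg_right
                (mul_le_mul_of_nonneg_left ?_ (Real.exp_nonneg _)) (hpnn s)
              rw [show c * Real.exp α * r ^ j = c * (Real.exp α * r ^ j) by ring]
              refine mul_le_mul_of_nonneg_left ?_ hc.le
              have e1 : Real.exp (β*(j+1)) * Real.exp (-α*j) = Real.exp β * Real.exp ((β - α)*j) := by
                rw [← Real.exp_add, ← Real.exp_add]; ring_nf
              rw [e1]
              have hb1 : Real.exp β ≤ Real.exp α := Real.exp_le_exp.2 (by linarith)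
              have hb2 : Real.exp ((β - α)*j) ≤ r ^ j := by
                rw [← Real.exp_nat_mul]
                refine Real.exp_le_exp.2 ?_
                have : β - α ≤ -(α/2) := by linarith
                nlinarith [Nat.cast_nonneg (α := ℝ) j]
              exact mul_le_mul hb1 hb2 (Real.exp_nonneg _) (Real.exp_nonneg _)
      refine le_trans step ?_
      have hfilt : (Finset.range M).filter (¬ · < L) = Finset.Ico L M := by
        ext j; simp [Finset.mem_filter, Finset.mem_range, Finset.mem_Ico]; omega
      have hgeom : ∑ j ∈ (Finset.range M).filter (¬ · < L), r ^ j ≤ r ^ L * (1/(1-r)) := by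
        rw [hfilt, Finset.sum_Ico_eq_sum_range]
        have : ∀ k, r ^ (L + k) = r ^ L * r ^ k := fun k => pow_add r L k
        rw [Finset.sum_congr rfl (fun k _ => this k), ← Finset.mul_sum]
        exact mul_le_mul_of_nonneg_left (geomsum_le hr0.le hr1 _) (pow_nonneg hr0.le L)
      have hLbound : c * Real.exp α * (r ^ L * (1/(1-r))) ≤ δ/4 := by
        rw [lt_div_iff₀ (by positivity)] at hL
        have h1r : 0 < 1 - r := by linarith
        rw [show c * Real.exp α * (r ^ L * (1/(1-r))) = r ^ L * (c * Real.exp α) / (1-r) by ring]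
        rw [div_le_iff₀ h1r]
        nlinarith
      calc ∑ j ∈ (Finset.range M).filter (¬ · < L),
              Real.exp (β*s) * (c * Real.exp α * r ^ j) * p s
          = Real.exp (β*s) * (c * Real.exp α) * p s *
              ∑ j ∈ (Finset.range M).filter (¬ · < L), r ^ j := by
            rw [Finset.mul_sum]; exact Finset.sum_congr rfl (fun j _ => by ring)
      _ ≤ Real.exp (β*s) * (c * Real.exp α) * p s * (r ^ L * (1/(1-r))) := by
            refine mul_le_mul_of_nonneg_left hgeom (by positivity)
      _ = Real.exp (β*s) * p s * (c * Real.exp α * (r ^ L * (1/(1-r)))) := by ring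
      _ ≤ Real.exp (β*s) * p s * (δ/4) := by
            refine mul_le_mul_of_nonneg_left hLbound (by positivity)
      _ = (δ/4) * (Real.exp (β*s) * p s) := by ring
    linarith
  -- the partial-sum bound
  have hWbound : ∀ N, ∑ t ∈ Finset.range N, Real.exp (β*t) * p t ≤ 4/δ := by
    have key : ∀ N, ∑ t ∈ Finset.range (N+1), Real.exp (β*t) * p t ≤ 4/δ := by
      intro N
      set W := ∑ t ∈ Finset.range (N+1), Real.exp (β*t) * p t with hW
      have hWnn : ∀ (t : ℕ), 0 ≤ Real.exp (β*t) * p t :=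
        fun t => mul_nonneg (Real.exp_nonneg _) (hpnn t)
      have step1 : W = (∑ t ∈ Finset.range N, Real.exp (β*(t+1)) * p (t+1)) + 1 := by
        rw [hW, Finset.sum_range_succ']
        simp [hp0]
      have step2 : ∑ t ∈ Finset.range N, Real.exp (β*(t+1)) * p (t+1)
          ≤ ∑ t ∈ Finset.range N, ∑ s ∈ Finset.range (t+1), Real.exp (β*(t+1)) * q s (t+1) := by
        refine Finset.sum_le_sum (fun t _ => ?_)
        rw [← Finset.mul_sum]
        exact mul_le_mul_of_nonneg_left (hpcover t) (Real.exp_nonneg _)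
      have step3 : ∑ t ∈ Finset.range N, ∑ s ∈ Finset.range (t+1), Real.exp (β*(t+1)) * q s (t+1)
          = ∑ s ∈ Finset.range N, ∑ t ∈ Finset.Ico s N, Real.exp (β*(t+1)) * q s (t+1) := by
        refine Finset.sum_comm' ?_
        intro t s
        simp only [Finset.mem_range, Finset.mem_Ico]
        omega
      have step4 : ∀ s, ∑ t ∈ Finset.Ico s N, Real.exp (β*(t+1)) * q s (t+1)
          ≤ (1 - δ/4) * (Real.exp (β*s) * p s) := by
        intro s
        rw [Finset.sum_Ico_eq_sum_range]
        have hcast : ∀ j : ℕ, Real.exp (β*((s+j:ℕ)+1)) * q s ((s+j)+1)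
            = Real.exp (β*(s+j+1)) * q s (s+j+1) := by
          intro j; push_cast; ring_nf
        rw [Finset.sum_congr rfl (fun j _ => hcast j)]
        exact hinner s (N - s)
      have step5 : W ≤ 1 + (1 - δ/4) * W := by
        have hsum : ∑ s ∈ Finset.range N, (1 - δ/4) * (Real.exp (β*s) * p s)
            = (1 - δ/4) * ∑ s ∈ Finset.range N, Real.exp (β*s) * p s := by
          rw [Finset.mul_sum]
        have hWN : ∑ s ∈ Finset.range N, Real.exp (β*s) * p s ≤ W := by
          rw [hW]
          exact Finset.sum_le_sum_of_subset_of_nonneg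
            (Finset.range_subset_range.2 (by omega)) (fun t _ _ => hWnn t)
        have h4 : ∑ s ∈ Finset.range N, ∑ t ∈ Finset.Ico s N, Real.exp (β*(t+1)) * q s (t+1)
            ≤ (1 - δ/4) * W := by
          calc ∑ s ∈ Finset.range N, ∑ t ∈ Finset.Ico s N, Real.exp (β*(t+1)) * q s (t+1)
              ≤ ∑ s ∈ Finset.range N, (1 - δ/4) * (Real.exp (β*s) * p s) :=
                Finset.sum_le_sum (fun s _ => step4 s)
          _ = (1 - δ/4) * ∑ s ∈ Finset.range N, Real.exp (β*s) * p s := hsum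
          _ ≤ (1 - δ/4) * W := mul_le_mul_of_nonneg_left hWN (by linarith)
        have h4' : ∑ t ∈ Finset.range N, ∑ s ∈ Finset.range (t+1),
            Real.exp (β*(t+1)) * q s (t+1) ≤ (1 - δ/4) * W := by
          rw [step3]; exact h4
        linarith [step1, step2, h4']
      -- conclude W ≤ 4/δ
      have hring : (1 - δ/4) * W = W - δ/4 * W := by ring
      have hδ4 : δ/4 * W ≤ 1 := by
        rw [hring] at step5; linarith
      rw [le_div_iff₀ hδ0]
      have hring2 : W * δ = 4 * (δ/4 * W) := by ring
      rw [hring2]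
      linarith
    intro N
    cases N with
    | zero => simp; positivity
    | succ n => exact key n
  -- final integral bound
  refine ⟨β, hβ0, ?_⟩
  have hle : ∀ ω, ENNReal.ofReal (Real.exp (β * (T ω : ℝ)))
      ≤ ∑' t : ℕ, (Z t).indicator (fun _ => ENNReal.ofReal (Real.exp (β * (t:ℝ)))) ω := by
    intro ω
    have hmem : ω ∈ Z (T ω) := by
      rw [hT ω]
      by_cases hb : BddAbove {n | X n ω = 0}
      · exact Nat.sSup_mem (s := {n | X n ω = 0}) ⟨0, hX0 ω⟩ hb
      · rw [csSup_of_not_bddAbove hb, csSup_empty]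
        show X ⊥ ω = 0
        exact hX0 ω
    calc ENNReal.ofReal (Real.exp (β * (T ω : ℝ)))
        = (Z (T ω)).indicator (fun _ => ENNReal.ofReal (Real.exp (β * ((T ω : ℕ):ℝ)))) ω := by
          rw [Set.indicator_of_mem hmem]
    _ ≤ ∑' t : ℕ, (Z t).indicator (fun _ => ENNReal.ofReal (Real.exp (β * (t:ℝ)))) ω :=
        ENNReal.le_tsum (T ω)
  calc ∫⁻ ω, ENNReal.ofReal (Real.exp (β * (T ω : ℝ))) ∂μ
      ≤ ∫⁻ ω, ∑' t : ℕ, (Z t).indicator (fun _ => ENNReal.ofReal (Real.exp (β * (t:ℝ)))) ω ∂μ :=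
        lintegral_mono hle
  _ = ∑' t : ℕ, ∫⁻ ω, (Z t).indicator (fun _ => ENNReal.ofReal (Real.exp (β * (t:ℝ)))) ω ∂μ :=
        lintegral_tsum (fun t => (measurable_const.indicator (hZm t)).aemeasurable)
  _ = ∑' t : ℕ, ENNReal.ofReal (Real.exp (β * (t:ℝ))) * μ (Z t) := by
        refine tsum_congr (fun t => ?_)
        rw [lintegral_indicator (hZm t), setLIntegral_const]
  _ < ⊤ := by
        refine lt_of_le_of_lt (ENNReal.tsum_le_of_sum_range_le (c := ENNReal.ofReal (4/δ))
          (fun N => ?_)) ENNReal.ofReal_lt_top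
        have heq : ∀ (t : ℕ), ENNReal.ofReal (Real.exp (β * (t:ℝ))) * μ (Z t)
            = ENNReal.ofReal (Real.exp (β * (t:ℝ)) * p t) := by
          intro t
          rw [ENNReal.ofReal_mul (Real.exp_nonneg _), hpdef,
            ENNReal.ofReal_toReal (measure_ne_top μ _)]
        rw [Finset.sum_congr rfl (fun t _ => heq t),
          ← ENNReal.ofReal_sum_of_nonneg (fun t _ => mul_nonneg (Real.exp_nonneg _) (hpnn t))]
        exact ENNReal.ofReal_le_ofReal (hWbound N)
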